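/- Let a, b, c be real numbers. For every n ∈ ℕ, the monic polynomial matrix Pₙ := Aₙ⁻¹·Qₙ satisfies Pₙ'' + Pₙ'·F₁ + Pₙ·F₀ = Λₙ(D₁)·Pₙ as matrices of polynomials, where Λₙ(D₁) = [[-2n, -2abn, 0],[0, -2n+2, 0],[0, 0, -2n]]; that is, the monic orthogonal polynomials are eigenfunctions of D₁ with eigenvalue Λₙ(D₁). -/

import Mathlib

/-!
`Qₙ` is itself an eigenfunction of `D₁`, with the diagonal eigenvalue `diag(-2n, -2n+2, -2n)`:
entry by entry, once second derivatives are eliminated by the Hermite equation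
`hₙ'' = 2x hₙ' - 2n hₙ` (and its translate by `b`), this is a polynomial identity.
Since `Aₙ` is constant, `D₁` commutes with left multiplication by `Aₙ⁻¹`, and the relation
`Aₙ Λₙ(D₁) = diag(-2n, -2n+2, -2n) Aₙ` converts the eigenvalue of `Qₙ` into that of
`Aₙ⁻¹ Qₙ`.
-/

open Matrix Polynomial

/-- The monic Hermite polynomials for the weight e^{-x²}:
h₀ = 1, h_{n+1}(x) = x·hₙ(x) - (1/2)·hₙ'(x). -/
noncomputable def h : ℕ → Polynomial ℝ
  | 0 => 1
  | n + 1 => X * h n - C (1 / 2 : ℝ) * derivative (h n)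

/-- The sequence Qₙ of matrix orthogonal polynomials for W. -/
noncomputable def Qmat (a b c : ℝ) (n : ℕ) : Matrix (Fin 3) (Fin 3) (Polynomial ℝ) :=
  !![(h n).comp (X - C b),
     C a * (h (n + 1) - (h n).comp (X - C b) * X),
     0;
     -(C (a * Real.exp (-b ^ 2) * n / 2)) * (h (n - 1)).comp (X - C b),
     C (a ^ 2 * Real.exp (-b ^ 2) * n / 2) * (h (n - 1)).comp (X - C b) * X
       + h n + C (c ^ 2 * n / 2) * h (n - 1) * X,
     -(C (c * n / 2)) * h (n - 1);
     0,
     C c * (h (n + 1) - h n * X),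
     h n]

/-- The leading coefficient Aₙ of Qₙ. -/
noncomputable def Amat (a b c : ℝ) (n : ℕ) : Matrix (Fin 3) (Fin 3) ℝ :=
  !![1, a * b * n, 0;
     0, a ^ 2 * Real.exp (-b ^ 2) * n / 2 + 1 + c ^ 2 * n / 2, 0;
     0, 0, 1]

/-- First-order (polynomial) coefficient of the operator D₁. -/
noncomputable def F1p (a b c : ℝ) : Matrix (Fin 3) (Fin 3) (Polynomial ℝ) :=
  !![C (2 * b) - 2 * X, C (-2 * a * b) * X + C (2 * a), 0;
     0, -2 * X, 0;
     0, C (2 * c), -2 * X]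

/-- Zeroth-order coefficient of the operator D₁. -/
noncomputable def F0p : Matrix (Fin 3) (Fin 3) (Polynomial ℝ) :=
  !![0, 0, 0; 0, 2, 0; 0, 0, 0]

/-- Eigenvalue matrix Λₙ(D₁). -/
noncomputable def Lambda1 (a b : ℝ) (n : ℕ) : Matrix (Fin 3) (Fin 3) ℝ :=
  !![-2 * (n : ℝ), -2 * a * b * (n : ℝ), 0;
     0, -2 * (n : ℝ) + 2, 0;
     0, 0, -2 * (n : ℝ)]

lemma derivative_h_succ (n : ℕ) : derivative (h (n + 1)) = ((n : ℝ[X]) + 1) * h n := by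
  induction n with
  | zero => simp [h]
  | succ m ih =>
    rw [h, derivative_sub, derivative_mul, derivative_X, derivative_C_mul, ih, h]
    simp only [derivative_mul, derivative_add, derivative_natCast, derivative_one, Nat.cast_succ]
    ring

lemma derivative_derivative_h (n : ℕ) :
    derivative (derivative (h n)) = 2 * X * derivative (h n) - 2 * (n : ℝ[X]) * h n := by
  cases n with
  | zero => simp [h]
  | succ m =>
    have half : (C (1 / 2 : ℝ) : ℝ[X]) * 2 = 1 := by
      rw [← C_ofNat, ← C_mul]; norm_num
    rw [derivative_h_succ, derivative_mul]
    simp only [derivative_add, derivative_natCast, derivative_one, h, Nat.cast_succ]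
    linear_combination (-((m : ℝ[X]) + 1)) * derivative (h m) * half

lemma Polynomial.derivative_comp_X_sub_C {R : Type*} [CommRing R] (p : R[X]) (b : R) :
    derivative (p.comp (X - C b)) = (derivative p).comp (X - C b) := by
  simp [derivative_comp]

lemma derivative_derivative_h_comp (b : ℝ) (n : ℕ) :
    derivative (derivative ((h n).comp (X - C b))) =
      2 * (X - C b) * derivative ((h n).comp (X - C b))
        - 2 * (n : ℝ[X]) * (h n).comp (X - C b) := by
  simp only [derivative_comp_X_sub_C, derivative_derivative_h, sub_comp, mul_comp, X_comp,
    natCast_comp, ofNat_comp, Nat.cast_ofNat]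

section DiffOp

variable {R : Type*} [CommSemiring R] {l m n : Type*} [Fintype m]

lemma Matrix.map_linearMap_map_C_mul (f : R[X] →ₗ[R] R[X]) (M : Matrix l m R)
    (P : Matrix m n R[X]) : (M.map C * P).map f = M.map C * P.map f := by
  ext i j
  simp [mul_apply, map_sum, ← smul_eq_C_mul]

variable [Fintype n]

noncomputable def diffOp (F₁ F₀ : Matrix n n R[X]) (P : Matrix m n R[X]) : Matrix m n R[X] :=
  P.map (fun p => derivative (derivative p)) + P.map (fun p => derivative p) * F₁ + P * F₀

lemma diffOp_map_C_mul (F₁ F₀ : Matrix n n R[X]) (M : Matrix l m R) (P : Matrix m n R[X]) :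
    diffOp F₁ F₀ (M.map C * P) = M.map C * diffOp F₁ F₀ P := by
  have h₁ : (M.map C * P).map (fun p => derivative p) = M.map C * P.map (fun p => derivative p) :=
    map_linearMap_map_C_mul derivative M P
  have h₂ : (M.map C * P).map (fun p => derivative (derivative p)) =
      M.map C * P.map (fun p => derivative (derivative p)) :=
    map_linearMap_map_C_mul (derivative ∘ₗ derivative) M P
  rw [diffOp, diffOp, h₁, h₂, Matrix.mul_add, Matrix.mul_add, Matrix.mul_assoc,
    Matrix.mul_assoc]

end DiffOp

section Inverse

variable {R : Type*} [CommRing R] {n : Type*} [Fintype n] [DecidableEq n]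

lemma Matrix.map_nonsing_inv {S : Type*} [CommRing S] (f : R →+* S) {A : Matrix n n R}
    (hA : IsUnit A.det) : (A.map f)⁻¹ = A⁻¹.map f :=
  inv_eq_left_inv <| by
    rw [← Matrix.map_mul, nonsing_inv_mul A hA, Matrix.map_one f f.map_zero f.map_one]

lemma Matrix.nonsing_inv_mul_eq_mul_nonsing_inv {A Λ Λ' : Matrix n n R}
    (hA : IsUnit A.det) (h : A * Λ = Λ' * A) : A⁻¹ * Λ' = Λ * A⁻¹ :=
  calc A⁻¹ * Λ' = A⁻¹ * (Λ' * A) * A⁻¹ := by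
        rw [Matrix.mul_assoc, Matrix.mul_assoc, mul_nonsing_inv A hA, Matrix.mul_one]
    _ = Λ * A⁻¹ := by rw [← h, ← Matrix.mul_assoc, nonsing_inv_mul A hA, Matrix.one_mul]

lemma diffOp_map_C_inv_mul {F₁ F₀ : Matrix n n R[X]} {A Λ Λ' : Matrix n n R}
    {Q : Matrix n n R[X]} (hA : IsUnit A.det) (hΛ : A * Λ = Λ' * A)
    (hQ : diffOp F₁ F₀ Q = Λ'.map C * Q) :
    diffOp F₁ F₀ ((A.map C)⁻¹ * Q) = Λ.map C * ((A.map C)⁻¹ * Q) := by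
  rw [Matrix.map_nonsing_inv C hA, diffOp_map_C_mul, hQ, ← Matrix.mul_assoc, ← Matrix.map_mul,
    nonsing_inv_mul_eq_mul_nonsing_inv hA hΛ, Matrix.map_mul, Matrix.mul_assoc]

end Inverse

noncomputable def LambdaQ (n : ℕ) : Matrix (Fin 3) (Fin 3) ℝ :=
  diagonal ![-2 * (n : ℝ), -2 * (n : ℝ) + 2, -2 * (n : ℝ)]

lemma isUnit_det_Amat (a b c : ℝ) (n : ℕ) : IsUnit (Amat a b c n).det := by
  have hdet : (Amat a b c n).det = a ^ 2 * Real.exp (-b ^ 2) * n / 2 + 1 + c ^ 2 * n / 2 := by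
    simp [Amat, det_fin_three]
  rw [isUnit_iff_ne_zero, hdet]
  positivity

lemma Amat_mul_Lambda1 (a b c : ℝ) (n : ℕ) :
    Amat a b c n * Lambda1 a b n = LambdaQ n * Amat a b c n := by
  ext i j
  fin_cases i <;> fin_cases j <;>
    simp [Amat, Lambda1, LambdaQ, mul_apply, Fin.sum_univ_three] <;> ring

lemma diffOp_Qmat (a b c : ℝ) (n : ℕ) :
    diffOp (F1p a b c) F0p (Qmat a b c n) = (LambdaQ n).map C * Qmat a b c n := by
  -- `ring` treats each `C r` as an atom, so the factorizations that the (1,1) entry needs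
  -- have to be made explicit.
  have hα : C (a ^ 2 * Real.exp (-b ^ 2) * n / 2) = C a * C (a * Real.exp (-b ^ 2) * n / 2) := by
    rw [← C_mul]; ring_nf
  have hγ : C (c ^ 2 * n / 2) = C c * C (c * n / 2) := by
    rw [← C_mul]; ring_nf
  rw [Qmat, hα, hγ]
  refine Matrix.ext fun i j => ?_
  cases n with
  | zero =>
    fin_cases i <;> fin_cases j <;>
      simp [C_ofNat, diffOp, F1p, F0p, LambdaQ, mul_apply, Fin.sum_univ_three, h]
  | succ m =>
    fin_cases i <;> fin_cases j <;>
      simp [C_ofNat, diffOp, F1p, F0p, LambdaQ, mul_apply, Fin.sum_univ_three,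
        derivative_derivative_h, derivative_derivative_h_comp] <;> ring

/-- the monic orthogonal polynomials Pₙ = Aₙ⁻¹·Qₙ are eigenfunctions
of D₁: Pₙ'' + Pₙ'·F₁ + Pₙ·F₀ = Λₙ(D₁)·Pₙ. -/
theorem monic_eigenfunctions_D1 (a b c : ℝ) (n : ℕ) :
    (((Amat a b c n).map C)⁻¹ * Qmat a b c n).map (fun p => derivative (derivative p))
      + (((Amat a b c n).map C)⁻¹ * Qmat a b c n).map (fun p => derivative p) * F1p a b c
      + (((Amat a b c n).map C)⁻¹ * Qmat a b c n) * F0p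
    = (Lambda1 a b n).map C * (((Amat a b c n).map C)⁻¹ * Qmat a b c n) :=
  diffOp_map_C_inv_mul (isUnit_det_Amat a b c n) (Amat_mul_Lambda1 a b c n) (diffOp_Qmat a b c n)
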